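/- arXiv:1710.06783 — 4 statements merged into one kernel-verified Lean document; each statement's English description precedes it below -/
import Mathlib

section
/- Let D be an integral domain, let 𝒯 be a finite multiset of elements of D, and let f = ∏_{r ∈ 𝒯} (x − r) ∈ D[x]. If Q is a nonzero prime ideal of D, then d(f) ⊆ Q if and only if 𝒯 contains a complete system of residues modulo Q, i.e., for every a ∈ D there exists r ∈ 𝒯 with a − r ∈ Q. -/
set_option linter.unusedSectionVars false

open Polynomial

variable (D : Type*) [CommRing D] [IsDomain D]

/-- The fixed divisor `d(g)` of a polynomial `g ∈ D[X]`: the ideal of `D`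
generated by the values `g(a)`, `a ∈ D`. -/
def fixDiv (g : Polynomial D) : Ideal D :=
  Ideal.span (Set.range fun a : D => g.eval a)

variable {D} in
theorem fixDiv_le_iff (g : D[X]) (I : Ideal D) :
    fixDiv D g ≤ I ↔ ∀ a : D, g.eval a ∈ I := by
  rw [fixDiv, Ideal.span_le, Set.range_subset_iff]
  rfl

theorem Ideal.IsPrime.eval_prod_X_sub_C_mem_iff {R : Type*} [CommRing R] {P : Ideal R}
    (hP : P.IsPrime) (T : Multiset R) (a : R) :
    (T.map fun r => X - C r).prod.eval a ∈ P ↔ ∃ r ∈ T, a - r ∈ P := by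
  rw [eval_multiset_prod, Multiset.map_map, hP.multiset_prod_mem_iff_exists_mem]
  simp

theorem fixDiv_le_prime_iff_complete_residues
    (T : Multiset D) (Q : Ideal D) (hQ : Q.IsPrime) :
    fixDiv D (T.map fun r => X - C r).prod ≤ Q ↔
      ∀ a : D, ∃ r ∈ T, a - r ∈ Q := by
  simp only [fixDiv_le_iff, hQ.eval_prod_X_sub_C_mem_iff]
end

section
/- Let D be a Dedekind domain, Q a nonzero prime ideal of D with associated Q-adic valuation v_Q, and 𝒯 a finite multiset of elements of D with f = ∏_{r ∈ 𝒯}(x − r) ∈ D[x]. Suppose 𝒯 = 𝒯₀ ⊎ 𝒯₁ ⊎ ⋯ ⊎ 𝒯ₑ (disjoint union of multisets) such that: (1) for all 1 ≤ i ≤ e, 𝒯ᵢ is a complete system of residues modulo Q, and for each residue class modulo Q the representatives of that class in the different 𝒯ᵢ are congruent to one another modulo Q²; and (2) there exists z ∈ D such that s ≢ z mod Q for every s ∈ 𝒯₀. Then v_Q(d(f)) = e, i.e., Q appears with exponent exactly e in the prime ideal factorization of the fixed divisor d(f). -/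
set_option linter.unusedSectionVars false

open Polynomial

variable (D : Type*) [CommRing D] [IsDomain D]

/-!
Each value `f(a)` contains, for every complete residue system `𝒯ᵢ`, the factor `a - r` with
`r ≡ a mod Q`, so `d(f) ⊆ Qᵉ`. For the converse pick `a ≡ z mod Q` which differs from one, hence
(by the `Q²`-congruences) from every, representative of its class by an element of `Q \ Q²`.
Then the factors coming from `𝒯₀` are prime to `Q` and each `𝒯ᵢ` contributes exactly one factor
of `Q`-adic valuation `1`, so `v_Q(f(a)) = e`.
-/

open IsDedekindDomain WithZero

theorem Multiset.exists_cons_of_countP_eq_one {α : Type*} {p : α → Prop} [DecidablePred p]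
    {s : Multiset α} (h : s.countP p = 1) : ∃ a t, s = a ::ₘ t ∧ p a ∧ ∀ b ∈ t, ¬ p b := by
  obtain ⟨a, ha, hpa⟩ := Multiset.countP_pos.mp (h ▸ Nat.one_pos)
  obtain ⟨t, rfl⟩ := Multiset.exists_cons_of_mem ha
  rw [Multiset.countP_cons_of_pos _ hpa, add_eq_right, Multiset.countP_eq_zero] at h
  exact ⟨a, t, rfl, hpa, h⟩

theorem Multiset.prod_map_add_sum {ι α M : Type*} [CommMonoid M] [Fintype ι]
    (s : Multiset α) (t : ι → Multiset α) (g : α → M) :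
    ((s + ∑ i, t i).map g).prod = (s.map g).prod * ∏ i, ((t i).map g).prod := by
  have hmap : (∑ i, t i).map g = ∑ i, (t i).map g := map_sum (Multiset.mapAddMonoidHom g) t _
  rw [Multiset.map_add, Multiset.prod_add, hmap, Multiset.prod_sum]

theorem Polynomial.eval_multiset_prod_X_sub_C {R : Type*} [CommRing R] (s : Multiset R) (a : R) :
    ((s.map fun r => X - C r).prod).eval a = (s.map fun r => a - r).prod := by
  simp only [eval_multiset_prod, Multiset.map_map, Function.comp_apply, eval_sub, eval_X, eval_C]

section CommRing

variable {R : Type*} [CommRing R] (Q : Ideal R)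

theorem Ideal.multiset_prod_sub_mem {s : Multiset R} {a r : R} (hr : r ∈ s) (har : a - r ∈ Q) :
    (s.map fun r => a - r).prod ∈ Q :=
  Q.mem_of_dvd (Multiset.dvd_prod (Multiset.mem_map_of_mem _ hr)) har

theorem Ideal.exists_sub_mem_forall_sub_notMem_sq {q : R} (hq : q ∈ Q) (hq2 : q ∉ Q ^ 2)
    (S : Set R) (hS : ∀ r ∈ S, ∀ s ∈ S, r - s ∈ Q → r - s ∈ Q ^ 2) (z : R) :
    ∃ a, a - z ∈ Q ∧ ∀ r ∈ S, a - r ∈ Q → a - r ∉ Q ^ 2 := by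
  by_cases h : ∃ r₀ ∈ S, z - r₀ ∈ Q
  · obtain ⟨r₀, hr₀, hzr₀⟩ := h
    refine ⟨r₀ + q, ?_, fun r hr har har2 => hq2 ?_⟩
    · convert Q.add_mem (Q.neg_mem hzr₀) hq using 1; ring
    · have hr₀r : r₀ - r ∈ Q := by convert Q.sub_mem har hq using 1; ring
      convert (Q ^ 2).sub_mem har2 (hS r₀ hr₀ r hr hr₀r) using 1; ring
  · exact ⟨z, by simp, fun r hr hzr => absurd ⟨r, hr, hzr⟩ h⟩

end CommRing

namespace IsDedekindDomain.HeightOneSpectrum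

variable {R : Type*} [CommRing R] [IsDedekindDomain R] (v : HeightOneSpectrum R)

theorem intValuation_eq_exp_neg_one {x : R} (hx : x ∈ v.asIdeal) (hx2 : x ∉ v.asIdeal ^ 2) :
    v.intValuation x = exp (-1) := by
  have hle := (v.intValuation_le_pow_iff_mem x 1).mpr (by simpa using hx)
  have hgt := not_le.mp ((v.intValuation_le_pow_iff_mem x 2).not.mpr hx2)
  have hx0 := ne_zero_of_lt hgt
  rw [← exp_log hx0] at hle hgt ⊢
  rw [exp_le_exp] at hle
  rw [exp_lt_exp] at hgt
  rw [exp_inj]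
  omega

theorem intValuation_multiset_prod_sub_eq_one {s : Multiset R} {a : R}
    (hs : ∀ r ∈ s, a - r ∉ v.asIdeal) : v.intValuation (s.map fun r => a - r).prod = 1 := by
  rw [map_multiset_prod, Multiset.map_map]
  exact Multiset.prod_eq_one fun x hx => by
    obtain ⟨r, hr, rfl⟩ := Multiset.mem_map.mp hx
    exact intValuation_eq_one_iff.mpr (hs r hr)

theorem intValuation_multiset_prod_sub_eq_exp_neg_one [DecidablePred (· ∈ v.asIdeal)]
    {s : Multiset R} {a : R} (hs : (s.countP fun r => a - r ∈ v.asIdeal) = 1)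
    (hs2 : ∀ r ∈ s, a - r ∈ v.asIdeal → a - r ∉ v.asIdeal ^ 2) :
    v.intValuation (s.map fun r => a - r).prod = exp (-1) := by
  obtain ⟨r, t, rfl, hr, ht⟩ := Multiset.exists_cons_of_countP_eq_one hs
  rw [Multiset.map_cons, Multiset.prod_cons, map_mul,
    v.intValuation_multiset_prod_sub_eq_one ht, mul_one]
  exact v.intValuation_eq_exp_neg_one hr (hs2 r (Multiset.mem_cons_self r t) hr)

theorem intValuation_eval_multiset_prod_X_sub_C
    [DecidablePred (· ∈ v.asIdeal)] {ι : Type*} [Fintype ι] (T0 : Multiset R)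
    (T : ι → Multiset R) {a : R} (h0 : ∀ s ∈ T0, a - s ∉ v.asIdeal)
    (hT : ∀ i, ((T i).countP fun r => a - r ∈ v.asIdeal) = 1)
    (hT2 : ∀ i, ∀ r ∈ T i, a - r ∈ v.asIdeal → a - r ∉ v.asIdeal ^ 2) :
    v.intValuation ((((T0 + ∑ i, T i).map fun r => X - C r).prod).eval a) =
      exp (-(Fintype.card ι : ℤ)) := by
  rw [eval_multiset_prod_X_sub_C, Multiset.prod_map_add_sum, map_mul, map_prod,
    v.intValuation_multiset_prod_sub_eq_one h0, one_mul,
    Finset.prod_congr rfl fun i _ =>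
      v.intValuation_multiset_prod_sub_eq_exp_neg_one (hT i) (hT2 i),
    Finset.prod_const, Finset.card_univ, ← exp_nsmul]
  simp

end IsDedekindDomain.HeightOneSpectrum

theorem fixDiv_le_pow {ι : Type*} [Fintype ι] (Q : Ideal D) (T0 : Multiset D)
    (T : ι → Multiset D)
    (hT : ∀ i a, ∃ r ∈ T i, a - r ∈ Q) :
    fixDiv D (((T0 + ∑ i, T i).map fun r => X - C r).prod) ≤ Q ^ Fintype.card ι := by
  rw [fixDiv, Ideal.span_le, Set.range_subset_iff]
  intro a
  rw [SetLike.mem_coe, eval_multiset_prod_X_sub_C, Multiset.prod_map_add_sum, ← Finset.card_univ,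
    ← Finset.prod_const]
  refine Ideal.mul_mem_left _ _ (Ideal.prod_mem_prod fun i _ => ?_)
  obtain ⟨r, hr, har⟩ := hT i a
  exact Q.multiset_prod_sub_mem hr har

theorem fixDiv_val_eq
    [IsDedekindDomain D]
    (Q : Ideal D) (hQ : Q.IsPrime) (hQ0 : Q ≠ ⊥) [DecidablePred (· ∈ Q)]
    (e : ℕ) (T0 : Multiset D) (T : Fin e → Multiset D)
    (hcomplete : ∀ i, ∀ a : D, ((T i).countP fun r => a - r ∈ Q) = 1)
    (hcong : ∀ i j, ∀ r ∈ T i, ∀ s ∈ T j, r - s ∈ Q → r - s ∈ Q ^ 2)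
    (z : D) (hz : ∀ s ∈ T0, s - z ∉ Q) :
    fixDiv D (((T0 + ∑ i, T i).map fun r => X - C r).prod) ≤ Q ^ e ∧
      ¬ fixDiv D (((T0 + ∑ i, T i).map fun r => X - C r).prod) ≤ Q ^ (e + 1) := by
  refine ⟨by simpa using fixDiv_le_pow D Q T0 T fun i a =>
    Multiset.countP_pos.mp ((hcomplete i a).symm ▸ Nat.one_pos), fun hle => ?_⟩
  obtain ⟨q, hq, hq2⟩ : ∃ q ∈ Q, q ∉ Q ^ 2 :=
    SetLike.exists_of_lt (by simpa using Ideal.pow_succ_lt_pow hQ0 1)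
  obtain ⟨a, haz, ha⟩ := Q.exists_sub_mem_forall_sub_notMem_sq hq hq2 {r | ∃ i, r ∈ T i}
    (by rintro r ⟨i, hr⟩ s ⟨j, hs⟩; exact hcong i j r hr s hs) z
  let v : HeightOneSpectrum D := ⟨Q, hQ, hQ0⟩
  have hval := v.intValuation_eval_multiset_prod_X_sub_C T0 T
    (fun s hs has => hz s hs (by simpa using Q.sub_mem haz has)) (hcomplete · a)
    (fun i r hr => ha r ⟨i, hr⟩)
  have hmem := (v.intValuation_le_pow_iff_mem _ (e + 1)).mpr (hle (Ideal.subset_span ⟨a, rfl⟩))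
  rw [hval, exp_le_exp, Fintype.card_fin] at hmem
  omega
end

section
/- Let D be a Dedekind domain with quotient field K and let f ∈ Int(D) be of the form f = (∏_{i ∈ I} fᵢ)/c, where c is a nonzero nonunit of D, I is a finite nonempty set, each fᵢ ∈ D[x] is irreducible in K[x], and d(∏_{i ∈ I} fᵢ) = cD. Let 𝒫 ⊆ maxspec(D) be the finite set of maximal ideals containing c. If f = g₁⋯g_m is any factorization of f into (not necessarily irreducible) nonunits of Int(D), then each gⱼ has the form gⱼ = aⱼ ∏_{i ∈ Iⱼ} fᵢ with ∅ ≠ Iⱼ ⊆ I and aⱼ ∈ K, where I₁ ⊎ ⋯ ⊎ I_m = I, a₁⋯a_m = c⁻¹, and moreover: (1) v_P(aⱼ) ≤ 0 for every maximal ideal P of D and every 1 ≤ j ≤ m; and (2) v_P(aⱼ) = 0 for every maximal ideal P ∉ 𝒫 and every 1 ≤ j ≤ m. -/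
/-
Over the field `K`, the factors `fᵢ` are primes of the UFD `K[X]`, so every factor `gⱼ` is a
constant `aⱼ` times a subproduct of the `fᵢ`. If `v_P(aⱼ) > 0` for some `P`, then since all
`g_k` are integer-valued, every value `f(d) = gⱼ(d) ∏_{k ≠ j} g_k(d)` has positive
`P`-valuation, i.e. `v_P((∏ fᵢ)(d)) > v_P(c)` for all `d ∈ D`; this contradicts
`d(∏ fᵢ) = cD`. So `v_P(aⱼ) ≤ 0` for all `P`, and as `∑ⱼ v_P(aⱼ) = -v_P(c)`, all `v_P(aⱼ)`
vanish when `c ∉ P`. Finally, a factor with `Iⱼ = ∅` would be a constant whose inverse has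
nonnegative valuation everywhere, hence lies in `D`, making `gⱼ` a unit of `Int(D)`.
-/

set_option linter.unusedSectionVars false

open Polynomial

variable (D : Type*) [CommRing D] [IsDomain D]
variable (K : Type*) [Field K] [Algebra D K] [IsFractionRing D K]

/-- The ring of integer-valued polynomials `Int(D) = {f ∈ K[X] | f(D) ⊆ D}`,
as a subring of `K[X]`. -/
def IntD : Subring (Polynomial K) where
  carrier := {f | ∀ a : D, f.eval (algebraMap D K a) ∈ (algebraMap D K).range}
  zero_mem' := fun a => by rw [eval_zero]; exact zero_mem _
  one_mem' := fun a => by rw [eval_one]; exact one_mem _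
  add_mem' := fun {f g} hf hg a => by rw [eval_add]; exact add_mem (hf a) (hg a)
  mul_mem' := fun {f g} hf hg a => by rw [eval_mul]; exact mul_mem (hf a) (hg a)
  neg_mem' := fun {f} hf a => by rw [eval_neg]; exact neg_mem (hf a)

open Finset

theorem Polynomial.exists_eq_C_mul_prod_filter_of_prod_eq_C_mul_prod
    {L ι κ : Type*} [Field L] [DecidableEq ι] [Fintype κ] [DecidableEq κ] [Nonempty κ]
    {p : ι → L[X]} (hp : ∀ i, Prime (p i)) {u : L} (hu : u ≠ 0) {s : Finset ι}
    {g : κ → L[X]} (h : ∏ j, g j = C u * ∏ i ∈ s, p i) :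
    ∃ (σ : ι → κ) (a : κ → L),
      (∀ j, g j = C (a j) * ∏ i ∈ s with σ i = j, p i) ∧ ∏ j, a j = u := by
  induction s using Finset.induction_on generalizing g with
  | empty =>
    rw [prod_empty, mul_one] at h
    have hunit : ∀ j, IsUnit (g j) := fun j =>
      isUnit_of_dvd_unit (dvd_prod_of_mem g (mem_univ j)) (h ▸ isUnit_C.2 hu.isUnit)
    choose a ha using fun j => (Polynomial.isUnit_iff.1 (hunit j)).imp fun _ => And.right
    refine ⟨fun _ => Classical.arbitrary κ, a, fun j => by simp [ha j], C_injective ?_⟩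
    rw [map_prod, ← h]
    exact prod_congr rfl fun j _ => ha j
  | insert i₀ s hi₀ ih =>
    have hdvd : p i₀ ∣ ∏ j, g j :=
      h ▸ dvd_mul_of_dvd_right (dvd_prod_of_mem p (mem_insert_self i₀ s)) _
    obtain ⟨j₀, -, q, hq⟩ := (hp i₀).exists_mem_finset_dvd hdvd
    have h' : ∏ j, Function.update g j₀ q j = C u * ∏ i ∈ s, p i := by
      apply mul_left_cancel₀ (hp i₀).ne_zero
      calc p i₀ * ∏ j, Function.update g j₀ q j = ∏ j, g j := by
            rw [prod_update_of_mem (mem_univ j₀), ← mul_assoc, ← hq,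
              prod_eq_mul_prod_sdiff_singleton_of_mem (mem_univ j₀)]
        _ = p i₀ * (C u * ∏ i ∈ s, p i) := by rw [h, prod_insert hi₀]; ring
    obtain ⟨σ, a, hga, hprod⟩ := ih h'
    refine ⟨Function.update σ i₀ j₀, a, fun j => ?_, hprod⟩
    have hfilter : ({i ∈ s | Function.update σ i₀ j₀ i = j} : Finset ι) = {i ∈ s | σ i = j} :=
      filter_congr fun i hi => by rw [Function.update_of_ne (ne_of_mem_of_not_mem hi hi₀)]
    rw [filter_insert, Function.update_self, hfilter]
    obtain rfl | hj := eq_or_ne j₀ j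
    · rw [if_pos rfl, prod_insert fun hi => hi₀ (mem_filter.1 hi).1, hq, mul_left_comm,
        ← Function.update_self j₀ q g, hga j₀]
    · rw [if_neg hj, ← hga j, Function.update_of_ne hj.symm]

section IntegerValued

variable {D K}

open IsDedekindDomain

theorem map_mem_IntD (q : D[X]) : q.map (algebraMap D K) ∈ IntD D K :=
  fun a => ⟨q.eval a, by rw [eval_map, eval₂_at_apply]⟩

theorem C_mem_IntD {a : K} (ha : a ∈ (algebraMap D K).range) : C a ∈ IntD D K :=
  fun _ => by rwa [eval_C]

variable [IsDedekindDomain D] (v : HeightOneSpectrum D)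

theorem valuation_eval_le_of_eq_C_mul {g h : K[X]} {a : K} (hg : g = C a * h)
    (hh : h ∈ IntD D K) (d : D) :
    v.valuation K (g.eval (algebraMap D K d)) ≤ v.valuation K a := by
  obtain ⟨r, hr⟩ := hh d
  rw [hg, eval_mul, eval_C, map_mul, ← hr]
  exact mul_le_of_le_one_right' (v.valuation_le_one r)

theorem exists_intValuation_le_eval_of_fixDiv_eq {G : D[X]} {c : D} (hc : c ≠ 0)
    (hG : fixDiv D G = Ideal.span {c}) :
    ∃ d : D, v.intValuation c ≤ v.intValuation (G.eval d) := by
  by_contra! hlt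
  have hcG : c ∈ Ideal.span (Set.range fun d => G.eval d) := by
    rw [← fixDiv, hG]
    exact Ideal.mem_span_singleton_self c
  have hspan : ∀ x ∈ Ideal.span (Set.range fun d => G.eval d),
      v.intValuation x < v.intValuation c := fun x hx => by
    induction hx using Submodule.span_induction with
    | mem x hx => obtain ⟨d, rfl⟩ := hx; exact hlt d
    | zero => simpa [pos_iff_ne_zero] using v.intValuation_ne_zero c hc
    | add x y _ _ hx hy => exact Valuation.map_add_lt _ hx hy
    | smul r x _ hx =>
      rw [smul_eq_mul, map_mul]
      exact (mul_le_of_le_one_left' (v.intValuation_le_one r)).trans_lt hx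
  exact lt_irrefl _ (hspan c hcG)

theorem exists_one_le_valuation_eval_of_fixDiv_eq {G : D[X]} {c : D} (hc : c ≠ 0)
    (hG : fixDiv D G = Ideal.span {c}) :
    ∃ d : D, 1 ≤ v.valuation K
      ((C (algebraMap D K c)⁻¹ * G.map (algebraMap D K)).eval (algebraMap D K d)) := by
  obtain ⟨d, hd⟩ := exists_intValuation_le_eval_of_fixDiv_eq v hc hG
  refine ⟨d, ?_⟩
  rw [eval_mul, eval_C, eval_map, eval₂_at_apply, map_mul, map_inv₀,
    v.valuation_of_algebraMap, v.valuation_of_algebraMap, one_le_inv_mul₀]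
  · exact hd
  · exact pos_iff_ne_zero.2 (v.intValuation_ne_zero c hc)

theorem isUnit_of_eq_C_of_one_le_valuation {g : K[X]} (hg : g ∈ IntD D K) {a : K}
    (hga : g = C a) (ha : a ≠ 0) (hv : ∀ v : HeightOneSpectrum D, 1 ≤ v.valuation K a) :
    IsUnit (⟨g, hg⟩ : IntD D K) := by
  subst hga
  have hinv : a⁻¹ ∈ (algebraMap D K).range :=
    HeightOneSpectrum.mem_integers_of_valuation_le_one K _ fun v => by
      rw [map_inv₀]; exact inv_le_one_of_one_le₀ (hv v)
  exact IsUnit.of_mul_eq_one ⟨C a⁻¹, C_mem_IntD hinv⟩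
    (Subtype.ext (by simp [← C_mul, mul_inv_cancel₀ ha]))

end IntegerValued

open IsDedekindDomain in
theorem shape_of_factorizations_IntD
    [IsDedekindDomain D]
    (ι : Type*) [Fintype ι] [DecidableEq ι]
    (f : ι → Polynomial D)
    (hfirr : ∀ i, Irreducible ((f i).map (algebraMap D K)))
    (c : D) (hc0 : c ≠ 0)
    (hfd : fixDiv D (∏ i, f i) = Ideal.span {c})
    (F : Polynomial K)
    (hF : F = C ((algebraMap D K c)⁻¹) * (∏ i, f i).map (algebraMap D K))
    (m : ℕ) (hm : 1 ≤ m) (g : Fin m → Polynomial K)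
    (hgmem : ∀ j, g j ∈ IntD D K)
    (hgnu : ∀ j, ¬ IsUnit (⟨g j, hgmem j⟩ : IntD D K))
    (hprod : ∏ j, g j = F) :
    ∃ (Ij : Fin m → Finset ι) (a : Fin m → K),
      (∀ j, (Ij j).Nonempty) ∧
      (∀ j k, j ≠ k → Disjoint (Ij j) (Ij k)) ∧
      (Finset.univ.biUnion Ij = (Finset.univ : Finset ι)) ∧
      (∀ j, g j = C (a j) * ∏ i ∈ Ij j, (f i).map (algebraMap D K)) ∧
      (∏ j, a j = (algebraMap D K c)⁻¹) ∧
      (∀ (P : Ideal D) (hP : P.IsMaximal) (hP0 : P ≠ ⊥) (j : Fin m),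
        1 ≤ (⟨P, hP.isPrime, hP0⟩ : HeightOneSpectrum D).valuation K (a j)) ∧
      (∀ (P : Ideal D) (hP : P.IsMaximal) (hP0 : P ≠ ⊥), c ∉ P → ∀ j : Fin m,
        (⟨P, hP.isPrime, hP0⟩ : HeightOneSpectrum D).valuation K (a j) = 1) := by
  have : Nonempty (Fin m) := ⟨⟨0, hm⟩⟩
  have hc : (algebraMap D K c)⁻¹ ≠ 0 :=
    inv_ne_zero ((map_ne_zero_iff _ (IsFractionRing.injective D K)).2 hc0)
  obtain ⟨σ, a, hga, hprod_a⟩ := exists_eq_C_mul_prod_filter_of_prod_eq_C_mul_prod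
    (fun i => (hfirr i).prime) hc (s := univ) (by rw [hprod, hF, Polynomial.map_prod])
  have ha0 : ∀ j, a j ≠ 0 := fun j h0 => hc (hprod_a ▸ prod_eq_zero (mem_univ j) h0)
  have hval : ∀ (v : HeightOneSpectrum D) j, 1 ≤ v.valuation K (a j) := by
    intro v j
    obtain ⟨d, hd⟩ := exists_one_le_valuation_eval_of_fixDiv_eq (K := K) v hc0 hfd
    rw [← hF] at hd
    have hFj : F = C (a j) *
        ((∏ i with σ i = j, (f i).map (algebraMap D K)) * ∏ k ∈ univ.erase j, g k) := by
      rw [← hprod, ← mul_prod_erase univ g (mem_univ j), hga j, mul_assoc]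
    exact hd.trans (valuation_eval_le_of_eq_C_mul v hFj
      (mul_mem (prod_mem fun i _ => map_mem_IntD (f i)) (prod_mem fun k _ => hgmem k)) d)
  have hval_eq : ∀ (v : HeightOneSpectrum D), c ∉ v.asIdeal → ∀ j, v.valuation K (a j) = 1 := by
    intro v hcv
    have : ∏ j, v.valuation K (a j) = 1 := by
      rw [← map_prod, hprod_a, map_inv₀, v.valuation_of_algebraMap,
        HeightOneSpectrum.intValuation_eq_one_iff.2 hcv, inv_one]
    exact fun j => (prod_eq_one_iff_of_one_le' fun j _ => hval v j).1 this j (mem_univ j)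
  refine ⟨fun j => {i | σ i = j}, a, fun j => ?_,
    fun j k hjk => disjoint_filter.2 fun i _ hj hk => hjk (hj ▸ hk), by ext i; simp, hga,
    hprod_a, fun P hP hP0 => hval ⟨P, hP.isPrime, hP0⟩,
    fun P hP hP0 => hval_eq ⟨P, hP.isPrime, hP0⟩⟩
  rw [nonempty_iff_ne_empty]
  intro hT
  exact hgnu j (isUnit_of_eq_C_of_one_le_valuation (hgmem j)
    (by simp only [hga j, show ({i | σ i = j} : Finset ι) = ∅ from hT, prod_empty, mul_one])
    (ha0 j) (hval · j))
end

section
/- Let D be an integral domain with quotient field K and let g ∈ D[x] be irreducible as an element of K[x]. Then every factorization of g in Int(D) as a product of two (not necessarily irreducible) factors is, up to units and reordering, of the form g = c · (g/c) with c ∈ D and d(g) ⊆ cD; that is, if g = h₁·h₂ with h₁, h₂ ∈ Int(D), then one of the factors is a constant c ∈ D dividing the fixed divisor d(g) (i.e., d(g) ⊆ cD) and the other factor is g/c. -/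
/-!
Irreducibility of `g` in `K[X]` forces one factor to be a unit of `K[X]`, i.e. a nonzero
constant; being integer-valued, that constant is some `c ∈ D`. The other factor is then
`g / c`, and it is integer-valued exactly when `c` divides every value `g(a)`, i.e. when
`d(g) ⊆ cD`.
-/

set_option linter.unusedSectionVars false

open Polynomial

variable (D : Type*) [CommRing D] [IsDomain D]
variable (K : Type*) [Field K] [Algebra D K] [IsFractionRing D K]

section

variable {D K}

theorem exists_eq_C_algebraMap_of_isUnit {h : K[X]} (hh : h ∈ IntD D K) (hu : IsUnit h) :
    ∃ c : D, c ≠ 0 ∧ h = C (algebraMap D K c) := by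
  obtain ⟨u, hu_unit, rfl⟩ := Polynomial.isUnit_iff.mp hu
  obtain ⟨c, hc⟩ := hh 0
  rw [eval_C] at hc
  refine ⟨c, ?_, by rw [hc]⟩
  rintro rfl
  exact hu_unit.ne_zero (by rw [← hc, map_zero])

theorem fixDiv_le_span_singleton_of_C_inv_mul_mem {g : D[X]} {c : D} (hc : c ≠ 0)
    (hg : C (algebraMap D K c)⁻¹ * g.map (algebraMap D K) ∈ IntD D K) :
    fixDiv D g ≤ Ideal.span {c} := by
  have hc' : algebraMap D K c ≠ 0 :=
    (map_ne_zero_iff _ (IsFractionRing.injective D K)).mpr hc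
  rw [fixDiv, Ideal.span_le]
  rintro _ ⟨a, rfl⟩
  obtain ⟨d, hd⟩ := hg a
  rw [eval_mul, eval_C, eval_map, eval₂_at_apply] at hd
  refine Ideal.mem_span_singleton'.mpr ⟨d, IsFractionRing.injective D K ?_⟩
  rw [map_mul, hd, mul_comm, mul_inv_cancel_left₀ hc']

theorem exists_eq_C_of_isUnit_of_map_eq_mul {g : D[X]} {h₁ h₂ : K[X]}
    (hh₁ : h₁ ∈ IntD D K) (hh₂ : h₂ ∈ IntD D K) (hu : IsUnit h₁)
    (heq : g.map (algebraMap D K) = h₁ * h₂) :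
    ∃ c : D, c ≠ 0 ∧ fixDiv D g ≤ Ideal.span {c} ∧
      h₁ = C (algebraMap D K c) ∧ h₂ = C (algebraMap D K c)⁻¹ * g.map (algebraMap D K) := by
  obtain ⟨c, hc, rfl⟩ := exists_eq_C_algebraMap_of_isUnit hh₁ hu
  have hc' : algebraMap D K c ≠ 0 :=
    (map_ne_zero_iff _ (IsFractionRing.injective D K)).mpr hc
  have h₂_eq : h₂ = C (algebraMap D K c)⁻¹ * g.map (algebraMap D K) := by
    rw [heq, ← mul_assoc, ← C_mul, inv_mul_cancel₀ hc', C_1, one_mul]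
  exact ⟨c, hc, fixDiv_le_span_singleton_of_C_inv_mul_mem hc (h₂_eq ▸ hh₂), rfl, h₂_eq⟩

end

/-- **Remark.** Let `D` be an integral domain with quotient field `K` and `g ∈ D[X]`
irreducible as an element of `K[X]`. Every factorization `g = h₁ · h₂` of `g` in
`Int(D)` into two (not necessarily irreducible) factors is of the form `g = c · (g/c)`
with `c ∈ D` and `d(g) ⊆ cD`: one of the two factors is the constant `c` and the other
one is `g/c`. -/
theorem factorization_of_Kirreducible
    (g : Polynomial D) (hg : Irreducible (g.map (algebraMap D K)))
    (h₁ h₂ : Polynomial K) (hh₁ : h₁ ∈ IntD D K) (hh₂ : h₂ ∈ IntD D K)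
    (heq : g.map (algebraMap D K) = h₁ * h₂) :
    ∃ c : D, c ≠ 0 ∧ fixDiv D g ≤ Ideal.span {c} ∧
      ((h₁ = C (algebraMap D K c) ∧
          h₂ = C ((algebraMap D K c)⁻¹) * g.map (algebraMap D K)) ∨
        (h₂ = C (algebraMap D K c) ∧
          h₁ = C ((algebraMap D K c)⁻¹) * g.map (algebraMap D K))) := by
  rcases hg.isUnit_or_isUnit heq with hu | hu
  · obtain ⟨c, hc, hfix, h₁_eq, h₂_eq⟩ := exists_eq_C_of_isUnit_of_map_eq_mul hh₁ hh₂ hu heq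
    exact ⟨c, hc, hfix, .inl ⟨h₁_eq, h₂_eq⟩⟩
  · obtain ⟨c, hc, hfix, h₂_eq, h₁_eq⟩ :=
      exists_eq_C_of_isUnit_of_map_eq_mul hh₂ hh₁ hu (heq.trans (mul_comm _ _))
    exact ⟨c, hc, hfix, .inr ⟨h₂_eq, h₁_eq⟩⟩
end
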